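/- arXiv:2407.17519 — 6 statements merged into one kernel-verified Lean document; each statement's English description precedes it below -/
import Mathlib

section
/- Let Q ⊆ ℝⁿ be a convex set and let g : Q → ℝⁿ be (ν, L_ν)-Hölder continuous. Let z, z⁺ ∈ Q, L > 0, and let w ∈ Q be a minimizer over Q of x ↦ ⟨g(z), x − z⟩ + (L/2)‖z − x‖². Then ⟨g(w), w − z⁺⟩ ≤ L_ν‖w − z‖^ν ‖w − z⁺‖ + (L/2)‖z − z⁺‖² − (L/2)‖z − w‖² − (L/2)‖z⁺ − w‖². -/
open scoped RealInnerProductSpace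

/-- key estimate on `⟨g(w), w - z⁺⟩` for a `(ν, L_ν)`-Hölder continuous
operator `g`, where `w` minimizes `x ↦ ⟨g(z), x - z⟩ + (L/2)‖z - x‖²` over `Q`. -/
theorem ump_holder_estimate {n : ℕ} (Q : Set (EuclideanSpace ℝ (Fin n)))
    (hQ : Convex ℝ Q)
    (g : EuclideanSpace ℝ (Fin n) → EuclideanSpace ℝ (Fin n))
    (ν Lν : ℝ) (hν : ν ∈ Set.Icc (0 : ℝ) 1) (hLν : 0 ≤ Lν)
    (hHolder : ∀ x ∈ Q, ∀ y ∈ Q, ‖g x - g y‖ ≤ Lν * ‖x - y‖ ^ ν)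
    (z zplus : EuclideanSpace ℝ (Fin n)) (hz : z ∈ Q) (hzplus : zplus ∈ Q)
    (L : ℝ) (hL : 0 < L)
    (w : EuclideanSpace ℝ (Fin n)) (hw : w ∈ Q)
    (hmin : ∀ x ∈ Q, ⟪g z, w - z⟫ + L / 2 * ‖z - w‖ ^ 2 ≤
      ⟪g z, x - z⟫ + L / 2 * ‖z - x‖ ^ 2) :
    ⟪g w, w - zplus⟫ ≤ Lν * ‖w - z‖ ^ ν * ‖w - zplus‖ + L / 2 * ‖z - zplus‖ ^ 2
      - L / 2 * ‖z - w‖ ^ 2 - L / 2 * ‖zplus - w‖ ^ 2 := by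
  set v := zplus - w with hv
  set S := ⟪g z, v⟫ - L * ⟪z - w, v⟫ with hS
  -- step estimate for each t ∈ (0,1]
  have step : ∀ t : ℝ, 0 < t → t ≤ 1 → 0 ≤ S + L / 2 * t * ‖v‖ ^ 2 := by
    intro t ht0 ht1
    have hx : (1 - t) • w + t • zplus ∈ Q :=
      hQ hw hzplus (by linarith) ht0.le (by ring)
    have hm := hmin _ hx
    have hx1 : (1 - t) • w + t • zplus - z = (w - z) + t • v := by
      simp only [hv]; module
    have hx2 : z - ((1 - t) • w + t • zplus) = (z - w) - t • v := by
      simp only [hv]; module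
    rw [hx1, hx2] at hm
    have e1 : ⟪g z, (w - z) + t • v⟫ = ⟪g z, w - z⟫ + t * ⟪g z, v⟫ := by
      rw [inner_add_right, real_inner_smul_right]
    have e2 : ‖(z - w) - t • v‖ ^ 2
        = ‖z - w‖ ^ 2 - 2 * (t * ⟪z - w, v⟫) + t ^ 2 * ‖v‖ ^ 2 := by
      rw [norm_sub_sq_real, real_inner_smul_right, norm_smul]
      rw [Real.norm_eq_abs, abs_of_pos ht0]
      ring
    rw [e1, e2] at hm
    have : 0 ≤ t * (S + L / 2 * t * ‖v‖ ^ 2) := by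
      simp only [hS]; nlinarith [hm]
    nlinarith [this, ht0]
  -- conclude 0 ≤ S
  have hS0 : 0 ≤ S := by
    rw [← sub_nonpos, zero_sub, neg_nonpos]
    apply le_of_forall_pos_le_add
    intro ε hε
    set C : ℝ := L / 2 * ‖v‖ ^ 2 with hC
    have hCnn : 0 ≤ C := by positivity
    set t : ℝ := min 1 (ε / (C + 1)) with ht
    have ht0 : 0 < t := lt_min one_pos (by positivity)
    have ht1 : t ≤ 1 := min_le_left _ _
    have h1 := step t ht0 ht1
    have h2 : t * (C + 1) ≤ ε := by
      have : t ≤ ε / (C + 1) := min_le_right _ _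
      calc t * (C + 1) ≤ (ε / (C + 1)) * (C + 1) := by nlinarith
        _ = ε := by field_simp
    have : L / 2 * t * ‖v‖ ^ 2 = t * C := by rw [hC]; ring
    nlinarith [h1, ht0.le]
  -- inner product expansion
  have hpar : ⟪z - w, w - zplus⟫ =
      (‖z - zplus‖ ^ 2 - ‖z - w‖ ^ 2 - ‖w - zplus‖ ^ 2) / 2 := by
    have hzz : z - zplus = (z - w) + (w - zplus) := by module
    rw [hzz, norm_add_sq_real]; ring
  -- Cauchy–Schwarz + Hölder
  have hcs : ⟪g w - g z, w - zplus⟫ ≤ Lν * ‖w - z‖ ^ ν * ‖w - zplus‖ := by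
    calc ⟪g w - g z, w - zplus⟫ ≤ ‖g w - g z‖ * ‖w - zplus‖ := real_inner_le_norm _ _
      _ ≤ (Lν * ‖w - z‖ ^ ν) * ‖w - zplus‖ := by
          apply mul_le_mul_of_nonneg_right (hHolder w hw z hz) (norm_nonneg _)
      _ = Lν * ‖w - z‖ ^ ν * ‖w - zplus‖ := by ring
  have hsplit : ⟪g w, w - zplus⟫ = ⟪g w - g z, w - zplus⟫ + ⟪g z, w - zplus⟫ := by
    rw [inner_sub_left]; ring
  have hvflip : ⟪g z, w - zplus⟫ = -⟪g z, v⟫ := by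
    rw [hv, ← inner_neg_right]; congr 1; module
  have hvflip2 : ⟪z - w, v⟫ = -⟪z - w, w - zplus⟫ := by
    rw [hv, ← inner_neg_right]; congr 1; module
  have hnorm : ‖zplus - w‖ = ‖w - zplus‖ := norm_sub_rev _ _
  rw [hsplit, hvflip, hnorm]
  rw [hS, hvflip2] at hS0
  nlinarith [hcs, hS0, hpar]
end

section
/- Let Q ⊆ ℝⁿ be a convex set with ‖x − y‖ ≤ D for all x, y ∈ Q, where D > 0. Let g : Q → ℝⁿ, let z_0 ∈ Q, L_0 > 0, and suppose the sequences (z_k) ⊆ Q, (w_k) ⊆ Q, (L_k) ⊆ (0,∞) satisfy for every k ≥ 0: w_k is a minimizer over Q of x ↦ ⟨g(z_k), x − z_k⟩ + (L_k/2)‖z_k − x‖²; z_{k+1} is a minimizer over Q of x ↦ ⟨g(w_k), x − w_k⟩ + (L_k/2)‖z_k − x‖²; and L_{k+1} = L_k + max{0, (2⟨g(w_k), w_k − z_{k+1}⟩ − L_k‖z_k − z_{k+1}‖²)/(D² + ‖z_k − z_{k+1}‖²)}. Then for every k ≥ 0 and every y ∈ Q: Σ_{i=0}^{k} ⟨g(w_i),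 w_i − y⟩ ≤ 2D²(L_{k+1} − L_0) + (L_0/2)‖z_0 − y‖². -/
/-!
The update `z (k+1)` is a prox step, so the three-point inequality of a strongly convex prox
objective bounds `⟪g w, z (k+1) - y⟫` by `L k / 2 * (‖z k - y‖² - ‖z (k+1) - y‖² - ‖z k - z (k+1)‖²)`.
The step-size rule is designed so that `⟪g w, w - z (k+1)⟫ ≤ D² (L (k+1) - L k) + L k / 2 * ‖z k - z (k+1)‖²`.
Adding the two and paying `D² / 2 * (L (k+1) - L k)` to replace `L k` by `L (k+1)` in front of
`‖z (k+1) - y‖²` makes the bound telescope in the potential `L i / 2 * ‖z i - y‖²`.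
-/

open scoped RealInnerProductSpace Topology
open Finset Filter

theorem nonneg_of_forall_add_mul_nonneg {α β : ℝ}
    (h : ∀ t : ℝ, 0 < t → t ≤ 1 → 0 ≤ α + t * β) : 0 ≤ α := by
  have hlim : Tendsto (fun t : ℝ => α + t * β) (𝓝[>] 0) (𝓝 α) := by
    have : Continuous fun t : ℝ => α + t * β := by fun_prop
    simpa using (this.tendsto 0).mono_left nhdsWithin_le_nhds
  refine ge_of_tendsto hlim ?_
  filter_upwards [Ioc_mem_nhdsGT one_pos] with t ht using h t ht.1 ht.2

section Prox

variable {E : Type*} [NormedAddCommGroup E] [InnerProductSpace ℝ E]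
  {Q : Set E} {a b c m y : E} {L : ℝ}

theorem inner_le_of_isMinOn_prox (hQ : Convex ℝ Q) (hm : m ∈ Q) (hy : y ∈ Q)
    (hmin : IsMinOn (fun x => ⟪a, x - b⟫ + L / 2 * ‖c - x‖ ^ 2) Q m) :
    L * ⟪c - m, y - m⟫ ≤ ⟪a, y - m⟫ := by
  suffices 0 ≤ ⟪a, y - m⟫ - L * ⟪c - m, y - m⟫ by linarith
  refine nonneg_of_forall_add_mul_nonneg (β := L / 2 * ‖y - m‖ ^ 2) fun t ht ht1 => ?_
  have hx := isMinOn_iff.1 hmin _ (hQ.add_smul_sub_mem hm hy ⟨ht.le, ht1⟩)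
  have e1 : ⟪a, m + t • (y - m) - b⟫ = ⟪a, m - b⟫ + t * ⟪a, y - m⟫ := by
    rw [add_sub_right_comm, inner_add_right, real_inner_smul_right]
  have e2 : ‖c - (m + t • (y - m))‖ ^ 2 =
      ‖c - m‖ ^ 2 - 2 * (t * ⟪c - m, y - m⟫) + t ^ 2 * ‖y - m‖ ^ 2 := by
    rw [← sub_sub, norm_sub_sq_real, real_inner_smul_right, norm_smul, mul_pow,
      Real.norm_eq_abs, sq_abs]
  simp only [e1, e2] at hx
  refine nonneg_of_mul_nonneg_right (a := t) ?_ ht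
  nlinarith

theorem prox_three_point (hQ : Convex ℝ Q) (hm : m ∈ Q) (hy : y ∈ Q)
    (hmin : IsMinOn (fun x => ⟪a, x - b⟫ + L / 2 * ‖c - x‖ ^ 2) Q m) :
    ⟪a, m - b⟫ + L / 2 * ‖c - m‖ ^ 2 + L / 2 * ‖m - y‖ ^ 2 ≤
      ⟪a, y - b⟫ + L / 2 * ‖c - y‖ ^ 2 := by
  have e1 : ‖c - y‖ ^ 2 = ‖c - m‖ ^ 2 - 2 * ⟪c - m, y - m⟫ + ‖m - y‖ ^ 2 := by
    rw [← sub_sub_sub_cancel_right c y m, norm_sub_sq_real, norm_sub_rev y m]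
  have e2 : ⟪a, y - b⟫ = ⟪a, m - b⟫ + ⟪a, y - m⟫ := by
    rw [← inner_add_right, sub_add_sub_cancel']
  rw [e1, e2]
  linarith [inner_le_of_isMinOn_prox hQ hm hy hmin]

end Prox

noncomputable def adaptiveStep (D L p s : ℝ) : ℝ := L + max 0 ((2 * p - L * s) / (D ^ 2 + s))

theorem le_adaptiveStep (D L p s : ℝ) : L ≤ adaptiveStep D L p s :=
  le_add_of_nonneg_right (le_max_left _ _)

theorem le_adaptiveStep_sub {D L p s : ℝ} (hD : 0 < D) (hs : 0 ≤ s) (hsD : s ≤ D ^ 2) :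
    p ≤ D ^ 2 * (adaptiveStep D L p s - L) + L / 2 * s := by
  have hden : 0 < D ^ 2 + s := by positivity
  have hΔ : (2 * p - L * s) / (D ^ 2 + s) ≤ adaptiveStep D L p s - L := by
    rw [adaptiveStep, add_sub_cancel_left]
    exact le_max_right _ _
  rw [div_le_iff₀ hden] at hΔ
  nlinarith [mul_le_mul_of_nonneg_left hsD (sub_nonneg.2 (le_adaptiveStep D L p s))]

theorem ump_step_inner_le {E : Type*} [NormedAddCommGroup E] [InnerProductSpace ℝ E]
    {Q : Set E} (hQ : Convex ℝ Q) {D : ℝ} (hD : 0 < D) (hQD : ∀ x ∈ Q, ∀ y ∈ Q, ‖x - y‖ ≤ D)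
    {a z z' w y : E} {L L' : ℝ} (hz : z ∈ Q) (hz' : z' ∈ Q) (hy : y ∈ Q)
    (hmin : IsMinOn (fun x => ⟪a, x - w⟫ + L / 2 * ‖z - x‖ ^ 2) Q z')
    (hL' : L' = adaptiveStep D L ⟪a, w - z'⟫ (‖z - z'‖ ^ 2)) :
    ⟪a, w - y⟫ ≤ 3 / 2 * D ^ 2 * (L' - L) + L / 2 * ‖z - y‖ ^ 2 - L' / 2 * ‖z' - y‖ ^ 2 := by
  have hsq : ∀ x ∈ Q, ∀ x' ∈ Q, ‖x - x'‖ ^ 2 ≤ D ^ 2 := fun x hx x' hx' =>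
    pow_le_pow_left₀ (norm_nonneg _) (hQD x hx x' hx') 2
  have hstep : ⟪a, w - z'⟫ ≤ D ^ 2 * (L' - L) + L / 2 * ‖z - z'‖ ^ 2 :=
    hL' ▸ le_adaptiveStep_sub hD (by positivity) (hsq z hz z' hz')
  have hΔ : (L' - L) * ‖z' - y‖ ^ 2 ≤ (L' - L) * D ^ 2 :=
    mul_le_mul_of_nonneg_left (hsq z' hz' y hy) (sub_nonneg.2 (hL' ▸ le_adaptiveStep ..))
  have hsplit : ⟪a, w - y⟫ = ⟪a, w - z'⟫ + ⟪a, z' - w⟫ - ⟪a, y - w⟫ := by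
    rw [← inner_add_right, ← inner_sub_right, sub_add_sub_cancel, sub_sub_sub_cancel_right]
  linarith [prox_three_point hQ hz' hy hmin]

theorem ump_telescoped_inequality_general {n : ℕ} (Q : Set (EuclideanSpace ℝ (Fin n)))
    (hQ : Convex ℝ Q)
    (D : ℝ) (hD : 0 < D) (hQD : ∀ x ∈ Q, ∀ y ∈ Q, ‖x - y‖ ≤ D)
    (g : EuclideanSpace ℝ (Fin n) → EuclideanSpace ℝ (Fin n))
    (z w : ℕ → EuclideanSpace ℝ (Fin n)) (L : ℕ → ℝ)
    (hzQ : ∀ k, z k ∈ Q) (hLpos : ∀ k, 0 < L k)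
    (hz : ∀ k, ∀ x ∈ Q, ⟪g (w k), z (k + 1) - w k⟫ + L k / 2 * ‖z k - z (k + 1)‖ ^ 2 ≤
      ⟪g (w k), x - w k⟫ + L k / 2 * ‖z k - x‖ ^ 2)
    (hLrec : ∀ k, L (k + 1) = L k + max 0
      ((2 * ⟪g (w k), w k - z (k + 1)⟫ - L k * ‖z k - z (k + 1)‖ ^ 2) /
        (D ^ 2 + ‖z k - z (k + 1)‖ ^ 2))) :
    ∀ k : ℕ, ∀ y ∈ Q,
      ∑ i ∈ range (k + 1), ⟪g (w i), w i - y⟫ ≤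
        2 * D ^ 2 * (L (k + 1) - L 0) + L 0 / 2 * ‖z 0 - y‖ ^ 2 := by
  intro k y hy
  have hmono : Monotone L :=
    monotone_nat_of_le_succ fun i => (hLrec i).trans_ge (le_adaptiveStep ..)
  set Φ : ℕ → ℝ := fun i => L i / 2 * ‖z i - y‖ ^ 2
  calc ∑ i ∈ range (k + 1), ⟪g (w i), w i - y⟫
      ≤ ∑ i ∈ range (k + 1), (3 / 2 * D ^ 2 * (L (i + 1) - L i) + (Φ i - Φ (i + 1))) :=
        sum_le_sum fun i _ =>
          (ump_step_inner_le hQ hD hQD (hzQ i) (hzQ (i + 1)) hy (isMinOn_iff.2 (hz i))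
            (hLrec i)).trans_eq (add_sub_assoc _ _ _)
    _ = 3 / 2 * D ^ 2 * (L (k + 1) - L 0) + (Φ 0 - Φ (k + 1)) := by
        rw [sum_add_distrib, ← mul_sum, sum_range_sub, sum_range_sub']
    _ ≤ 2 * D ^ 2 * (L (k + 1) - L 0) + L 0 / 2 * ‖z 0 - y‖ ^ 2 := by
        have hΦ : 0 ≤ Φ (k + 1) := by have := hLpos (k + 1); positivity
        have hgrowth := mul_nonneg (sq_nonneg D) (sub_nonneg.2 (hmono (Nat.zero_le (k + 1))))
        linarith [show Φ 0 = L 0 / 2 * ‖z 0 - y‖ ^ 2 from rfl]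

/-- telescoped descent inequality of the UMP method (deterministic setting). -/
theorem ump_telescoped_inequality {n : ℕ} (Q : Set (EuclideanSpace ℝ (Fin n)))
    (hQ : Convex ℝ Q)
    (D : ℝ) (hD : 0 < D) (hQD : ∀ x ∈ Q, ∀ y ∈ Q, ‖x - y‖ ≤ D)
    (g : EuclideanSpace ℝ (Fin n) → EuclideanSpace ℝ (Fin n))
    (z w : ℕ → EuclideanSpace ℝ (Fin n)) (L : ℕ → ℝ)
    (hzQ : ∀ k, z k ∈ Q) (hwQ : ∀ k, w k ∈ Q) (hLpos : ∀ k, 0 < L k)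
    (hw : ∀ k, ∀ x ∈ Q, ⟪g (z k), w k - z k⟫ + L k / 2 * ‖z k - w k‖ ^ 2 ≤
      ⟪g (z k), x - z k⟫ + L k / 2 * ‖z k - x‖ ^ 2)
    (hz : ∀ k, ∀ x ∈ Q, ⟪g (w k), z (k + 1) - w k⟫ + L k / 2 * ‖z k - z (k + 1)‖ ^ 2 ≤
      ⟪g (w k), x - w k⟫ + L k / 2 * ‖z k - x‖ ^ 2)
    (hLrec : ∀ k, L (k + 1) = L k + max 0
      ((2 * ⟪g (w k), w k - z (k + 1)⟫ - L k * ‖z k - z (k + 1)‖ ^ 2) /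
        (D ^ 2 + ‖z k - z (k + 1)‖ ^ 2))) :
    ∀ k : ℕ, ∀ y ∈ Q,
      ∑ i ∈ range (k + 1), ⟪g (w i), w i - y⟫ ≤
        2 * D ^ 2 * (L (k + 1) - L 0) + L 0 / 2 * ‖z 0 - y‖ ^ 2 :=
  ump_telescoped_inequality_general Q hQ D hD hQD g z w L hzQ hLpos hz hLrec
end

section
/- Let Q ⊆ ℝⁿ be a nonempty compact convex set with ‖x − y‖ ≤ D for all x, y ∈ Q, where D > 0, and let g : Q → ℝⁿ be a continuous monotone operator. Let z_0 ∈ Q, L_0 > 0, and suppose the sequences (z_k), (w_k) ⊆ Q and (L_k) ⊆ (0,∞) satisfy the UMP recursions: w_k minimizes x ↦ ⟨g(z_k), x − z_k⟩ + (L_k/2)‖z_k − x‖² over Q; z_{k+1} minimizes x ↦ ⟨g(w_k), x − w_k⟩ + (L_k/2)‖z_k − x‖² over Q; L_{k+1} = L_k + max{0, (2⟨g(w_k), w_k − z_{k+1}⟩ − L_k‖z_k − z_{k+1}‖²)/(D² + ‖z_k − z_{k+1}‖²)}. Then for every k ≥ 0, the averaged point ŵ = (1/(k+1)) Σ_{i=0}^{k}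 w_i satisfies Gap(ŵ) = max_{y ∈ Q} ⟨g(y), ŵ − y⟩ ≤ 2D² L_{k+1}/(k+1). -/
/-!
The step defining `z_{k+1}` is a proximal step, so its first-order optimality condition gives the
three-point inequality
`⟨g(w_k), z_{k+1} - y⟩ ≤ L_k/2 (‖z_k - y‖² - ‖z_k - z_{k+1}‖² - ‖z_{k+1} - y‖²)`.
The update of `L` is designed so that the remaining term `⟨g(w_k), w_k - z_{k+1}⟩` is paid for
by the increment `L_{k+1} - L_k` (at a cost of `3/2 D²` per unit), and then
`∑_{i ≤ k} ⟨g(w_i), w_i - y⟩` telescopes to at most `2 D² L_{k+1}`. Monotonicity of `g` bounds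
`⟨g(y), ŵ - y⟩` by the average of these terms.
-/

open scoped RealInnerProductSpace
open Finset

variable {E : Type*} [NormedAddCommGroup E] [InnerProductSpace ℝ E]

theorem Finset.sum_range_le_sub_of_le_sub {a φ : ℕ → ℝ} (h : ∀ i, a i ≤ φ i - φ (i + 1))
    (n : ℕ) : ∑ i ∈ range n, a i ≤ φ 0 - φ n :=
  (sum_le_sum fun i _ => h i).trans_eq (sum_range_sub' φ n)

theorem inner_average_range_sub (v y : E) (w : ℕ → E) (k : ℕ) :
    ⟪v, (1 / (k + 1 : ℝ)) • (∑ i ∈ range (k + 1), w i) - y⟫ =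
      1 / (k + 1 : ℝ) * ∑ i ∈ range (k + 1), ⟪v, w i - y⟫ := by
  simp only [inner_sub_right, real_inner_smul_right, inner_sum, sum_sub_distrib, sum_const,
    card_range, nsmul_eq_mul]
  field_simp
  push_cast
  ring

theorem inner_sub_le_of_isMinOn_prox {Q : Set E} (hQ : Convex ℝ Q) {a c z p y : E} {L : ℝ}
    (hp : p ∈ Q) (hy : y ∈ Q)
    (hmin : IsMinOn (fun x => ⟪a, x - c⟫ + L / 2 * ‖z - x‖ ^ 2) Q p) :
    ⟪a, p - y⟫ ≤ L / 2 * (‖z - y‖ ^ 2 - ‖z - p‖ ^ 2 - ‖p - y‖ ^ 2) := by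
  have hlin : HasFDerivAt (fun x => ⟪a, x - c⟫) (innerSL ℝ a) p :=
    ((innerSL ℝ a).hasFDerivAt.sub_const ⟪a, c⟫).congr_of_eventuallyEq
      (.of_forall fun x => by simp [inner_sub_right])
  have hsq := ((hasFDerivAt_id p).const_sub z).norm_sq.const_mul (L / 2)
  have hfirst : 0 ≤ ⟪a, y - p⟫ + L * ⟪p - z, y - p⟫ := by
    have := hmin.localize.hasFDerivWithinAt_nonneg (hlin.add hsq).hasFDerivWithinAt
      (sub_mem_posTangentConeAt_of_segment_subset (hQ.segment_subset hp hy))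
    simp only [id_eq, ContinuousLinearMap.comp_neg, ContinuousLinearMap.comp_id, add_apply,
      coe_innerSL_apply, smul_apply, neg_apply, nsmul_eq_mul, Nat.cast_ofNat, smul_eq_mul,
      inner_sub_left] at this
    rw [inner_sub_left]
    linarith
  have hthree : 2 * ⟪p - z, y - p⟫ = ‖z - y‖ ^ 2 - ‖z - p‖ ^ 2 - ‖p - y‖ ^ 2 := by
    rw [show z - y = (z - p) + (p - y) by abel, norm_add_sq_real, ← inner_neg_neg,
      neg_sub, neg_sub, real_inner_comm]
    ring
  rw [← hthree, ← neg_sub y p, inner_neg_right]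
  linarith

theorem inner_sub_le_of_ump_step {Q : Set E} (hQ : Convex ℝ Q) {D : ℝ} (hD : 0 < D)
    (hQD : ∀ x ∈ Q, ∀ y ∈ Q, ‖x - y‖ ≤ D) {G w z z' y : E} {L L' : ℝ}
    (hz : z ∈ Q) (hz' : z' ∈ Q) (hy : y ∈ Q)
    (hmin : IsMinOn (fun x => ⟪G, x - w⟫ + L / 2 * ‖z - x‖ ^ 2) Q z')
    (hL' : L' = L + max 0
      ((2 * ⟪G, w - z'⟫ - L * ‖z - z'‖ ^ 2) / (D ^ 2 + ‖z - z'‖ ^ 2))) :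
    ⟪G, w - y⟫ ≤ 3 / 2 * D ^ 2 * (L' - L) + L / 2 * ‖z - y‖ ^ 2 - L' / 2 * ‖z' - y‖ ^ 2 := by
  have hδ : L' - L = max 0
      ((2 * ⟪G, w - z'⟫ - L * ‖z - z'‖ ^ 2) / (D ^ 2 + ‖z - z'‖ ^ 2)) := by
    rw [hL', add_sub_cancel_left]
  have hδ0 : 0 ≤ L' - L := hδ ▸ le_max_left _ _
  have hadapt : 2 * ⟪G, w - z'⟫ - L * ‖z - z'‖ ^ 2 ≤ (L' - L) * (D ^ 2 + ‖z - z'‖ ^ 2) :=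
    (div_le_iff₀ (by positivity)).1 (hδ ▸ le_max_right _ _)
  have hzz' : ‖z - z'‖ ^ 2 ≤ D ^ 2 := pow_le_pow_left₀ (norm_nonneg _) (hQD _ hz _ hz') 2
  have hz'y : ‖z' - y‖ ^ 2 ≤ D ^ 2 := pow_le_pow_left₀ (norm_nonneg _) (hQD _ hz' _ hy) 2
  have hprox := inner_sub_le_of_isMinOn_prox hQ hz' hy hmin
  have hsplit : ⟪G, w - y⟫ = ⟪G, w - z'⟫ + ⟪G, z' - y⟫ := by
    rw [← inner_add_right, sub_add_sub_cancel]
  nlinarith [mul_le_mul_of_nonneg_left hzz' hδ0, mul_le_mul_of_nonneg_left hz'y hδ0]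

theorem ump_gap_bound_general {n : ℕ} (Q : Set (EuclideanSpace ℝ (Fin n)))
    (hQne : Q.Nonempty) (hQ : Convex ℝ Q)
    (D : ℝ) (hD : 0 < D) (hQD : ∀ x ∈ Q, ∀ y ∈ Q, ‖x - y‖ ≤ D)
    (g : EuclideanSpace ℝ (Fin n) → EuclideanSpace ℝ (Fin n))
    (hmono : ∀ x ∈ Q, ∀ y ∈ Q, 0 ≤ ⟪g x - g y, x - y⟫)
    (z w : ℕ → EuclideanSpace ℝ (Fin n)) (L : ℕ → ℝ)
    (hzQ : ∀ k, z k ∈ Q) (hwQ : ∀ k, w k ∈ Q) (hLpos : ∀ k, 0 < L k)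
    (hz : ∀ k, ∀ x ∈ Q, ⟪g (w k), z (k + 1) - w k⟫ + L k / 2 * ‖z k - z (k + 1)‖ ^ 2 ≤
      ⟪g (w k), x - w k⟫ + L k / 2 * ‖z k - x‖ ^ 2)
    (hLrec : ∀ k, L (k + 1) = L k + max 0
      ((2 * ⟪g (w k), w k - z (k + 1)⟫ - L k * ‖z k - z (k + 1)‖ ^ 2) /
        (D ^ 2 + ‖z k - z (k + 1)‖ ^ 2))) :
    ∀ k : ℕ,
      (⨆ y : Q, ⟪g (y : EuclideanSpace ℝ (Fin n)),
        (1 / (k + 1 : ℝ)) • (∑ i ∈ range (k + 1), w i) - (y : EuclideanSpace ℝ (Fin n))⟫) ≤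
      2 * D ^ 2 * L (k + 1) / (k + 1 : ℝ) := by
  intro k
  have := hQne.to_subtype
  refine ciSup_le fun ⟨y, hy⟩ => ?_
  have hsum := Finset.sum_range_le_sub_of_le_sub
    (a := fun i => ⟪g (w i), w i - y⟫)
    (φ := fun i => L i / 2 * ‖z i - y‖ ^ 2 - 3 / 2 * D ^ 2 * L i)
    (fun i => by
      have := inner_sub_le_of_ump_step hQ hD hQD (hzQ i) (hzQ (i + 1)) hy
        (isMinOn_iff.2 (hz i)) (hLrec i)
      linarith) (k + 1)
  have hz0 : ‖z 0 - y‖ ^ 2 ≤ D ^ 2 := pow_le_pow_left₀ (norm_nonneg _) (hQD _ (hzQ 0) _ hy) 2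
  calc ⟪g y, (1 / (k + 1 : ℝ)) • (∑ i ∈ range (k + 1), w i) - y⟫
      = 1 / (k + 1 : ℝ) * ∑ i ∈ range (k + 1), ⟪g y, w i - y⟫ := inner_average_range_sub ..
    _ ≤ 1 / (k + 1 : ℝ) * ∑ i ∈ range (k + 1), ⟪g (w i), w i - y⟫ := by
        gcongr with i
        have := hmono (w i) (hwQ i) y hy
        rw [inner_sub_left] at this
        linarith
    _ ≤ 1 / (k + 1 : ℝ) * (2 * D ^ 2 * L (k + 1)) := by
        gcongr
        nlinarith [hLpos 0, hLpos (k + 1), mul_le_mul_of_nonneg_left hz0 (hLpos 0).le,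
          mul_nonneg (hLpos (k + 1)).le (sq_nonneg ‖z (k + 1) - y‖)]
    _ = 2 * D ^ 2 * L (k + 1) / (k + 1 : ℝ) := by ring

/-- gap bound `Gap(ŵ) ≤ 2D²L_{k+1}/(k+1)` for the averaged iterate of the
UMP method applied to a continuous monotone operator on a compact convex set. -/
theorem ump_gap_bound {n : ℕ} (Q : Set (EuclideanSpace ℝ (Fin n)))
    (hQne : Q.Nonempty) (hQc : IsCompact Q) (hQ : Convex ℝ Q)
    (D : ℝ) (hD : 0 < D) (hQD : ∀ x ∈ Q, ∀ y ∈ Q, ‖x - y‖ ≤ D)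
    (g : EuclideanSpace ℝ (Fin n) → EuclideanSpace ℝ (Fin n))
    (hg : ContinuousOn g Q)
    (hmono : ∀ x ∈ Q, ∀ y ∈ Q, 0 ≤ ⟪g x - g y, x - y⟫)
    (z w : ℕ → EuclideanSpace ℝ (Fin n)) (L : ℕ → ℝ)
    (hzQ : ∀ k, z k ∈ Q) (hwQ : ∀ k, w k ∈ Q) (hLpos : ∀ k, 0 < L k)
    (hw : ∀ k, ∀ x ∈ Q, ⟪g (z k), w k - z k⟫ + L k / 2 * ‖z k - w k‖ ^ 2 ≤
      ⟪g (z k), x - z k⟫ + L k / 2 * ‖z k - x‖ ^ 2)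
    (hz : ∀ k, ∀ x ∈ Q, ⟪g (w k), z (k + 1) - w k⟫ + L k / 2 * ‖z k - z (k + 1)‖ ^ 2 ≤
      ⟪g (w k), x - w k⟫ + L k / 2 * ‖z k - x‖ ^ 2)
    (hLrec : ∀ k, L (k + 1) = L k + max 0
      ((2 * ⟪g (w k), w k - z (k + 1)⟫ - L k * ‖z k - z (k + 1)‖ ^ 2) /
        (D ^ 2 + ‖z k - z (k + 1)‖ ^ 2))) :
    ∀ k : ℕ,
      (⨆ y : Q, ⟪g (y : EuclideanSpace ℝ (Fin n)),
        (1 / (k + 1 : ℝ)) • (∑ i ∈ range (k + 1), w i) - (y : EuclideanSpace ℝ (Fin n))⟫) ≤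
      2 * D ^ 2 * L (k + 1) / (k + 1 : ℝ) :=
  ump_gap_bound_general Q hQne hQ D hD hQD g hmono z w L hzQ hwQ hLpos hz hLrec
end

section
/- Let ν ∈ (0,1), L_ν > 0 and L > 0. Then for all real x, y ≥ 0: L_ν x^ν y − (L/2)(x² + y²) ≤ ν^{ν/(1−ν)} (1 − ν^{1/ν}) L_ν^{2/(1−ν)} / (2 L^{(1+ν)/(1−ν)}). -/
/-!
Maximising first in `y` (completing the square) leaves `Lν² x^{2ν}/(2L) − (L/2) x²`, a function
`a t^ν − b t` of `t = x²`. Since `t ↦ t^ν` is concave, it lies below its tangent at the critical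
point `s = (ν a / b)^{1/(1−ν)}`, which gives the maximum `(1 − ν) a s^ν`. Unwinding the constants
yields the bound with `1 − ν` in place of `1 − ν^{1/ν}`, and `ν^{1/ν} ≤ ν`.
-/

open Real

lemma mul_sub_half_mul_sq_le {a L : ℝ} (hL : 0 < L) (y : ℝ) :
    a * y - L / 2 * y ^ 2 ≤ a ^ 2 / (2 * L) := by
  have hsq : a ^ 2 / (2 * L) - (a * y - L / 2 * y ^ 2) = (a - L * y) ^ 2 / (2 * L) := by
    field_simp
    ring
  have : 0 ≤ (a - L * y) ^ 2 / (2 * L) := by positivity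
  linarith

lemma rpow_le_rpow_add_mul_sub {ν s t : ℝ} (hν0 : 0 ≤ ν) (hν1 : ν ≤ 1) (hs : 0 < s) (ht : 0 ≤ t) :
    t ^ ν ≤ s ^ ν + ν * s ^ (ν - 1) * (t - s) := by
  have hbernoulli : (1 + (t / s - 1)) ^ ν ≤ 1 + ν * (t / s - 1) :=
    rpow_one_add_le_one_add_mul_self (by linarith [div_nonneg ht hs.le]) hν0 hν1
  rw [add_sub_cancel, div_rpow ht hs.le, div_le_iff₀ (rpow_pos_of_pos hs ν)] at hbernoulli
  calc t ^ ν ≤ (1 + ν * (t / s - 1)) * s ^ ν := hbernoulli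
    _ = s ^ ν + ν * s ^ (ν - 1) * (t - s) := by
      rw [rpow_sub_one hs.ne']
      field_simp

lemma mul_rpow_sub_mul_le {ν a b t : ℝ} (hν0 : 0 < ν) (hν1 : ν < 1) (ha : 0 < a) (hb : 0 < b)
    (ht : 0 ≤ t) :
    a * t ^ ν - b * t ≤ (1 - ν) * a * (ν * a / b) ^ (ν / (1 - ν)) := by
  have h1ν : 1 - ν ≠ 0 := by linarith
  have hc : 0 < ν * a / b := by positivity
  set s := (ν * a / b) ^ (1 / (1 - ν)) with hs_def
  have hs : 0 < s := rpow_pos_of_pos hc _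
  have hsν : s ^ ν = (ν * a / b) ^ (ν / (1 - ν)) := by
    rw [hs_def, ← rpow_mul hc.le]
    ring_nf
  have hcritical : ν * a * s ^ (ν - 1) = b := by
    rw [hs_def, ← rpow_mul hc.le, show 1 / (1 - ν) * (ν - 1) = -1 by field_simp; ring,
      rpow_neg_one]
    field_simp
  have hbs : b * s = ν * a * s ^ ν := by
    rw [← hcritical, mul_assoc, ← rpow_add_one hs.ne', sub_add_cancel]
  calc a * t ^ ν - b * t ≤ a * (s ^ ν + ν * s ^ (ν - 1) * (t - s)) - b * t := by
        gcongr
        exact rpow_le_rpow_add_mul_sub hν0.le hν1.le hs ht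
    _ = (1 - ν) * a * s ^ ν := by linear_combination (t - s) * hcritical - hbs
    _ = (1 - ν) * a * (ν * a / b) ^ (ν / (1 - ν)) := by rw [hsν]

lemma holder_quadratic_constant_eq {ν Lν L : ℝ} (hν0 : 0 < ν) (hν1 : ν < 1) (hLν : 0 < Lν)
    (hL : 0 < L) :
    (1 - ν) * (Lν ^ 2 / (2 * L)) * (ν * (Lν ^ 2 / (2 * L)) / (L / 2)) ^ (ν / (1 - ν)) =
      ν ^ (ν / (1 - ν)) * (1 - ν) * Lν ^ (2 / (1 - ν)) / (2 * L ^ ((1 + ν) / (1 - ν))) := by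
  have h1ν : 1 - ν ≠ 0 := by linarith
  have hLν_exp : 2 / (1 - ν) = 2 + 2 * (ν / (1 - ν)) := by field_simp; ring
  have hL_exp : (1 + ν) / (1 - ν) = 1 + 2 * (ν / (1 - ν)) := by field_simp; ring
  rw [show ν * (Lν ^ 2 / (2 * L)) / (L / 2) = ν * Lν ^ 2 / L ^ 2 by field_simp,
    div_rpow (by positivity) (by positivity), mul_rpow hν0.le (by positivity),
    hLν_exp, hL_exp, rpow_add hLν, rpow_add hL, rpow_mul hLν.le, rpow_mul hL.le, rpow_one,
    rpow_two, rpow_two]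
  field_simp

theorem holder_quadratic_max_bound_general (ν Lν L : ℝ) (hν : ν ∈ Set.Ioo (0 : ℝ) 1)
    (hLν : 0 < Lν) (hL : 0 < L) (x y : ℝ) (hx : 0 ≤ x) :
    Lν * x ^ ν * y - L / 2 * (x ^ 2 + y ^ 2) ≤
      ν ^ (ν / (1 - ν)) * (1 - ν ^ (1 / ν)) * Lν ^ (2 / (1 - ν)) /
        (2 * L ^ ((1 + ν) / (1 - ν))) := by
  obtain ⟨hν0, hν1⟩ := hν
  have hx_pow : (x ^ ν) ^ 2 = (x ^ 2) ^ ν := by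
    rw [← rpow_natCast, ← rpow_natCast, ← rpow_mul hx, ← rpow_mul hx, mul_comm]
  have hν_pow : ν ^ (1 / ν) ≤ ν := by
    simpa using rpow_le_rpow_of_exponent_ge hν0 hν1.le (one_le_one_div hν0 hν1.le)
  calc Lν * x ^ ν * y - L / 2 * (x ^ 2 + y ^ 2)
      = (Lν * x ^ ν * y - L / 2 * y ^ 2) - L / 2 * x ^ 2 := by ring
    _ ≤ (Lν * x ^ ν) ^ 2 / (2 * L) - L / 2 * x ^ 2 := by
      gcongr
      exact mul_sub_half_mul_sq_le hL y
    _ = Lν ^ 2 / (2 * L) * (x ^ 2) ^ ν - L / 2 * x ^ 2 := by rw [mul_pow, hx_pow]; ring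
    _ ≤ (1 - ν) * (Lν ^ 2 / (2 * L)) * (ν * (Lν ^ 2 / (2 * L)) / (L / 2)) ^ (ν / (1 - ν)) :=
      mul_rpow_sub_mul_le hν0 hν1 (by positivity) (by positivity) (sq_nonneg x)
    _ = ν ^ (ν / (1 - ν)) * (1 - ν) * Lν ^ (2 / (1 - ν)) / (2 * L ^ ((1 + ν) / (1 - ν))) :=
      holder_quadratic_constant_eq hν0 hν1 hLν hL
    _ ≤ _ := by gcongr

/-- maximum of the concave function `f(x,y) = L_ν x^ν y − (L/2)(x² + y²)`
over the nonnegative quadrant. -/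
theorem holder_quadratic_max_bound (ν Lν L : ℝ) (hν : ν ∈ Set.Ioo (0 : ℝ) 1)
    (hLν : 0 < Lν) (hL : 0 < L) (x y : ℝ) (hx : 0 ≤ x) (hy : 0 ≤ y) :
    Lν * x ^ ν * y - L / 2 * (x ^ 2 + y ^ 2) ≤
      ν ^ (ν / (1 - ν)) * (1 - ν ^ (1 / ν)) * Lν ^ (2 / (1 - ν)) /
        (2 * L ^ ((1 + ν) / (1 - ν))) :=
  holder_quadratic_max_bound_general ν Lν L hν hLν hL x y hx
end

section
/- Let (x_k)_{k≥0}, (α_k)_{k≥0}, (β_k)_{k≥0} be sequences of positive real numbers and let p, q ≥ 1 be reals. Suppose that for every k ≥ 0 at least one of the two inequalities holds: x_{k+1}^p ≤ α_k + x_k^p, or x_{k+1}^q ≤ β_k + x_k^q. Then for every k ≥ 0: x_{k+1} ≤ (Σ_{i=0}^{k} α_i)^{1/p} + (Σ_{i=0}^{k} β_i)^{1/q} + x_0. -/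
open Finset

/-!
By Minkowski's inequality for the vectors `(a ^ (1/p), u)` and `(0, c)`,
`(a + (u + c) ^ p) ^ (1/p) ≤ (a + u ^ p) ^ (1/p) + c`. Hence if `x_k ≤ A ^ (1/p) + c` and
`x_{k+1} ^ p ≤ a + x_k ^ p`, then `x_{k+1} ≤ (A + a) ^ (1/p) + c`: a step of the first kind only
increases the `p`-part of the bound, a step of the second kind only its `q`-part, and the
theorem follows by induction on `k`.
-/

theorem rpow_add_add_rpow_le {p : ℝ} (hp : 1 ≤ p) {a u c : ℝ} (ha : 0 ≤ a) (hu : 0 ≤ u)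
    (hc : 0 ≤ c) : (a + (u + c) ^ p) ^ (1 / p) ≤ (a + u ^ p) ^ (1 / p) + c := by
  have hp₀ : p ≠ 0 := by positivity
  have key := Real.Lp_add_le_of_nonneg (s := univ) (f := ![a ^ (1 / p), u]) (g := ![0, c]) hp
    (by simp [Fin.forall_fin_two, hu, Real.rpow_nonneg ha]) (by simp [Fin.forall_fin_two, hc])
  simpa [Fin.sum_univ_two, ← Real.rpow_mul ha, hp₀, Real.zero_rpow,
    Real.rpow_rpow_inv hc hp₀] using key

theorem le_rpow_add_add_of_rpow_le {p : ℝ} (hp : 1 ≤ p) {x y A a c : ℝ} (hx : 0 ≤ x)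
    (hy : 0 ≤ y) (hA : 0 ≤ A) (ha : 0 ≤ a) (hc : 0 ≤ c) (hxy : y ^ p ≤ a + x ^ p)
    (hxA : x ≤ A ^ (1 / p) + c) : y ≤ (A + a) ^ (1 / p) + c := by
  have hp₀ : 0 < p := by positivity
  have hAp : (A ^ (1 / p)) ^ p = A := by
    rw [← Real.rpow_mul hA, one_div_mul_cancel hp₀.ne', Real.rpow_one]
  calc y = (y ^ p) ^ (1 / p) := by
        rw [← Real.rpow_mul hy, mul_one_div_cancel hp₀.ne', Real.rpow_one]
    _ ≤ (a + (A ^ (1 / p) + c) ^ p) ^ (1 / p) := by gcongr; exact hxy.trans (by gcongr)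
    _ ≤ (a + A) ^ (1 / p) + c := by
      simpa only [hAp] using rpow_add_add_rpow_le hp ha (Real.rpow_nonneg hA (1 / p)) hc
    _ = (A + a) ^ (1 / p) + c := by rw [add_comm a]

/-- Lemma 4: telescoping bound for a sequence satisfying, at each step,
at least one of two recursive power inequalities. -/
theorem telescoping_power_recursion (x α β : ℕ → ℝ)
    (hx : ∀ k, 0 < x k) (hα : ∀ k, 0 < α k) (hβ : ∀ k, 0 < β k)
    (p q : ℝ) (hp : 1 ≤ p) (hq : 1 ≤ q)
    (hrec : ∀ k, x (k + 1) ^ p ≤ α k + x k ^ p ∨ x (k + 1) ^ q ≤ β k + x k ^ q) :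
    ∀ k : ℕ, x (k + 1) ≤ (∑ i ∈ range (k + 1), α i) ^ (1 / p) +
      (∑ i ∈ range (k + 1), β i) ^ (1 / q) + x 0 := by
  suffices h : ∀ k,
      x k ≤ (∑ i ∈ range k, α i) ^ (1 / p) + (∑ i ∈ range k, β i) ^ (1 / q) + x 0
    from fun k => h (k + 1)
  intro k
  induction k with
  | zero => simp [Real.zero_rpow, (by positivity : p ≠ 0), (by positivity : q ≠ 0)]
  | succ k ih =>
    set A := ∑ i ∈ range k, α i
    set B := ∑ i ∈ range k, β i
    have hA : 0 ≤ A := sum_nonneg fun i _ => (hα i).le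
    have hB : 0 ≤ B := sum_nonneg fun i _ => (hβ i).le
    rw [sum_range_succ, sum_range_succ]
    rcases hrec k with hstep | hstep
    · have hBq : B ^ (1 / q) ≤ (B + β k) ^ (1 / q) := by
        gcongr; exact le_add_of_nonneg_right (hβ k).le
      have hc : 0 ≤ B ^ (1 / q) + x 0 := add_nonneg (Real.rpow_nonneg hB _) (hx 0).le
      linarith [le_rpow_add_add_of_rpow_le hp (hx k).le (hx (k + 1)).le hA (hα k).le hc hstep
        (by linarith)]
    · have hAp : A ^ (1 / p) ≤ (A + α k) ^ (1 / p) := by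
        gcongr; exact le_add_of_nonneg_right (hα k).le
      have hc : 0 ≤ A ^ (1 / p) + x 0 := add_nonneg (Real.rpow_nonneg hA _) (hx 0).le
      linarith [le_rpow_add_add_of_rpow_le hq (hx k).le (hx (k + 1)).le hB (hβ k).le hc hstep
        (by linarith)]
end

section
/- Let p ≥ 1 be a real number and let a, s, t, u ≥ 0 be real numbers. Then a + (s^{1/p} + t + u)^p ≤ ((a + s)^{1/p} + t + u)^p. -/
/-- Minkowski's inequality in `ℓ^p` for the vectors `(x, y)` and `(0, z)`. -/
theorem Real.rpow_add_add_rpow_le {p x y z : ℝ} (hp : 1 ≤ p) (hx : 0 ≤ x) (hy : 0 ≤ y)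
    (hz : 0 ≤ z) : (x ^ p + (y + z) ^ p) ^ (1 / p) ≤ (x ^ p + y ^ p) ^ (1 / p) + z := by
  have hp0 : p ≠ 0 := by positivity
  have h := Real.Lp_add_le_of_nonneg Finset.univ (f := ![x, y]) (g := ![0, z]) hp
    (by simp [Fin.forall_fin_two, hx, hy]) (by simp [Fin.forall_fin_two, hz])
  simpa [Fin.sum_univ_two, Real.zero_rpow hp0, Real.rpow_rpow_inv hz hp0] using h

/-- the reverse-triangle (Minkowski) step used to telescope recursive
power inequalities. -/
theorem minkowski_telescoping_step (p a s t u : ℝ) (hp : 1 ≤ p)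
    (ha : 0 ≤ a) (hs : 0 ≤ s) (ht : 0 ≤ t) (hu : 0 ≤ u) :
    a + (s ^ (1 / p) + t + u) ^ p ≤ ((a + s) ^ (1 / p) + t + u) ^ p := by
  have hp0 : 0 < p := by positivity
  have hroot {x : ℝ} (hx : 0 ≤ x) : (x ^ (1 / p)) ^ p = x := by
    rw [one_div, Real.rpow_inv_rpow hx hp0.ne']
  have h := Real.rpow_add_add_rpow_le hp (Real.rpow_nonneg ha (1 / p))
    (Real.rpow_nonneg hs (1 / p)) (add_nonneg ht hu)
  rw [hroot ha, hroot hs, one_div, Real.rpow_inv_le_iff_of_pos (by positivity) (by positivity) hp0,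
    ← one_div] at h
  simpa only [add_assoc] using h
end
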